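/- arXiv:1911.03907 — 4 statements merged into one kernel-verified Lean document; each statement's English description precedes it below -/
import Mathlib

section
/- Define μ₂(x,y) = BCH(x, (1/2)·BCH(-x,y)) in the completed free Lie algebra on x, y. Then μ₂ is symmetric: μ₂(x,y) = μ₂(y,x). -/
/-- Noncommutative formal power series in `n` variables over `ℚ`:
the completed free associative algebra, given by coefficient functions on words. -/
abbrev NC (n : ℕ) := List (Fin n) → ℚ

namespace NC
variable {n : ℕ}

/-- Pointwise addition. -/
def add (f g : NC n) : NC n := fun w => f w + g w

/-- Pointwise negation. -/
def neg (f : NC n) : NC n := fun w => - f w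

/-- Pointwise subtraction. -/
def sub (f g : NC n) : NC n := fun w => f w - g w

/-- Scalar multiplication. -/
def smul (q : ℚ) (f : NC n) : NC n := fun w => q * f w

/-- The zero series. -/
def zero : NC n := fun _ => 0

/-- The unit series. -/
def one : NC n := fun w => if w = [] then 1 else 0

/-- The `i`-th generator (noncommuting indeterminate). -/
def X (i : Fin n) : NC n := fun w => if w = [i] then 1 else 0

/-- The Cauchy (concatenation) product of noncommutative series. -/
def mul (f g : NC n) : NC n :=
  fun w => ∑ k ∈ Finset.range (w.length + 1), f (w.take k) * g (w.drop k)

/-- Powers. -/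
def pow (f : NC n) : ℕ → NC n
  | 0 => one
  | k + 1 => mul f (pow f k)

/-- The Lie bracket `[f,g] = fg - gf`. -/
def br (f g : NC n) : NC n := sub (mul f g) (mul g f)

/-- The formal exponential; for a series with zero constant term all but finitely
many terms contribute to each coefficient, so this truncated sum is exact. -/
def exp (f : NC n) : NC n :=
  fun w => ∑ k ∈ Finset.range (w.length + 1), (k.factorial : ℚ)⁻¹ * pow f k w

/-- The formal logarithm; exact on series with constant term `1`. -/
def log (g : NC n) : NC n :=
  fun w => ∑ k ∈ Finset.range (w.length + 1),
    (-1 : ℚ) ^ (k + 1) * (k : ℚ)⁻¹ * pow (sub g one) k w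

/-- The Baker–Campbell–Hausdorff series: the unique formal series with
`exp f * exp g = exp (bch f g)`. -/
def bch (f g : NC n) : NC n := log (mul (exp f) (exp g))

/-- `μ₂(x,y) = BCH(x, ½·BCH(-x,y))`. -/
def mu2 (f g : NC n) : NC n := bch f (smul (1/2) (bch (neg f) g))

/-- Iterated (multi-argument) BCH: `BCH(x₁,…,xₙ) = BCH(x₁, BCH(x₂,…,xₙ))`. -/
def bchList : List (NC n) → NC n
  | [] => zero
  | f :: l => bch f (bchList l)

/-- Truncation: projection onto the span of words of length `≤ d`
(Lie monomials with at most `d - 1` brackets). -/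
def trunc (d : ℕ) (f : NC n) : NC n :=
  fun w => if w.length ≤ d then f w else 0

/-- `exp(ad_f)` applied to `g`, i.e. `Σ_k ad_f^k(g)/k!`; for `f` with zero constant
term all but finitely many terms contribute to each coefficient. -/
def expAd (f g : NC n) : NC n :=
  fun w => ∑ k ∈ Finset.range (w.length + 1),
    (k.factorial : ℚ)⁻¹ * ((fun z => br f z)^[k] g) w

end NC

/-!
Write `a = exp x`, `b = exp y` and `c = BCH(-x, y)`, so that `exp c = a⁻¹ b`, and put
`s = exp (c / 2)`; then `μ₂(x, y) = log (a s)`. In the group of units of the completed free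
algebra, `s * s = a⁻¹ b` gives `s⁻¹ * s⁻¹ = b⁻¹ a`, which is also the square of
`t = exp (BCH(-y, x) / 2)`. Series with constant term `1` have unique square roots, so `s⁻¹ = t`
and `a s = b s⁻¹ = b t`, whose logarithm is `μ₂(y, x)`.

The identity `exp (log g) = g` behind `exp (BCH(f, g)) = exp f * exp g` is reduced, by
evaluating one-variable power series at `g - 1`, to `exp (log (1 + X)) = 1 + X` in `ℚ⟦X⟧`,
which holds because both sides solve `(1 + X) F' = F` with `F(0) = 1`.
-/

namespace PowerSeries

open Finset

theorem coeff_subst_eq_sum {A : Type*} [CommRing A] {q : A⟦X⟧} (hq : constantCoeff q = 0)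
    (p : A⟦X⟧) {k N : ℕ} (h : k < N) :
    coeff k (p.subst q) = ∑ m ∈ range N, coeff m p * coeff k (q ^ m) := by
  rw [coeff_subst' (HasSubst.of_constantCoeff_zero' hq)]
  refine finsum_eq_sum_of_support_subset _ fun m hm => ?_
  by_contra hmN
  refine hm ?_
  change coeff m p • coeff k (q ^ m) = 0
  rw [smul_eq_mul, coeff_of_lt_order k ?_, mul_zero]
  exact (Nat.cast_lt.mpr (h.trans_le (not_lt.mp (by simpa using hmN)))).trans_le
    (le_order_pow_of_constantCoeff_eq_zero m hq)

variable {A : Type*} [CommRing A] [Algebra ℚ A]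

theorem one_add_X_mul_derivative_log : (1 + X) * d⁄dX A (log A) = 1 := by
  ext k
  rw [deriv_log, add_mul, one_mul, map_add]
  rcases k with _ | k
  · simp
  · simp [coeff_succ_X_mul, pow_succ]

theorem eq_zero_of_one_add_X_mul_derivative_eq_self {G : A⟦X⟧}
    (h : (1 + X) * d⁄dX A G = G) (h0 : constantCoeff G = 0) : G = 0 := by
  ext k
  rw [map_zero]
  induction k with
  | zero => simpa using h0
  | succ k ih =>
    have hk := congrArg (coeff k) h
    rw [add_mul, one_mul, map_add, coeff_derivative, ih] at hk
    rcases k with _ | k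
    · simpa using hk
    · rw [coeff_succ_X_mul, coeff_derivative, ih, zero_mul, add_zero] at hk
      have hunit : IsUnit ((k + 1 + 1 : ℕ) : A) := by
        simpa using (IsUnit.mk0 ((k + 1 + 1 : ℕ) : ℚ) (by positivity)).map (algebraMap ℚ A)
      exact hunit.mul_left_eq_zero.mp (by simpa [mul_comm] using hk)

theorem exp_subst_log : (exp A).subst (log A) = 1 + X := by
  set F := (exp A).subst (log A)
  have hF : (1 + X) * d⁄dX A F = F := by
    rw [derivative_subst HasSubst.log, derivative_exp, mul_left_comm,
      one_add_X_mul_derivative_log, mul_one]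
  have hF0 : constantCoeff F = 1 := by
    rw [← coeff_zero_eq_constantCoeff_apply, coeff_subst_eq_sum constantCoeff_log _ zero_lt_one]
    simp
  refine sub_eq_zero.mp (eq_zero_of_one_add_X_mul_derivative_eq_self ?_ (by simp [hF0]))
  rw [map_sub, mul_sub, hF, map_add, derivative_X, Derivation.map_one_eq_zero, zero_add, mul_one]

end PowerSeries

namespace NC

open Finset PowerSeries

variable {n : ℕ}

protected theorem mul_apply (f g : NC n) (w : List (Fin n)) :
    mul f g w = ∑ k ∈ range (w.length + 1), f (w.take k) * g (w.drop k) := rfl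

protected theorem mul_assoc (f g h : NC n) : mul (mul f g) h = mul f (mul g h) := by
  funext w
  set F : ℕ → ℕ → ℚ := fun j i =>
    f (w.take j) * g ((w.drop j).take i) * h (w.drop (j + i))
  have left : ∀ k ∈ range (w.length + 1),
      mul f g (w.take k) * h (w.drop k) = ∑ j ∈ range (k + 1), F j (k - j) := by
    intro k hk
    have hk : k ≤ w.length := Nat.lt_succ_iff.mp (mem_range.mp hk)
    rw [NC.mul_apply, sum_mul, List.length_take, min_eq_left hk]
    refine sum_congr rfl fun j hj => ?_
    have hj : j ≤ k := Nat.lt_succ_iff.mp (mem_range.mp hj)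
    simp only [F, List.take_take, min_eq_left hj, List.drop_take, Nat.add_sub_cancel' hj]
  have right : ∀ j ∈ range (w.length + 1),
      f (w.take j) * mul g h (w.drop j) = ∑ i ∈ range (w.length + 1 - j), F j i := by
    intro j hj
    have hj : j ≤ w.length := Nat.lt_succ_iff.mp (mem_range.mp hj)
    rw [NC.mul_apply, mul_sum, List.length_drop, Nat.sub_add_comm hj]
    exact sum_congr rfl fun i _ => by simp only [F, List.drop_drop, mul_assoc]
  rw [NC.mul_apply, NC.mul_apply, sum_congr rfl left, sum_congr rfl right, sum_range_diag_flip]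

protected theorem one_mul (f : NC n) : mul one f = f := by
  funext w
  rw [NC.mul_apply, sum_range_succ']
  cases w <;> simp [one]

protected theorem mul_one (f : NC n) : mul f one = f := by
  funext w
  rw [NC.mul_apply, sum_range_succ, sum_eq_zero fun k hk => ?_]
  · simp [one]
  · simp [one, (mem_range.mp hk).not_ge]

protected theorem pow_add (u : NC n) (a b : ℕ) : pow u (a + b) = mul (pow u a) (pow u b) := by
  induction a with
  | zero => rw [Nat.zero_add, pow, NC.one_mul]
  | succ a ih => rw [Nat.add_right_comm, pow, pow, ih, NC.mul_assoc]

/-- Not an instance: `NC n` already carries the pointwise product of functions. -/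
abbrev mulMonoid : Monoid (NC n) where
  mul := mul
  one := one
  mul_assoc := NC.mul_assoc
  one_mul := NC.one_mul
  mul_one := NC.mul_one
  npow k u := pow u k
  npow_zero _ := rfl
  npow_succ k u := by
    change pow u (k + 1) = mul (pow u k) u
    rw [NC.pow_add, pow, pow, NC.mul_one]

theorem mul_apply_nil (f g : NC n) : mul f g [] = f [] * g [] := by
  simp [NC.mul_apply]

theorem eq_of_mul_self_eq {f g : NC n} (hf : f [] = 1) (hg : g [] = 1)
    (h : mul f f = mul g g) : f = g := by
  suffices ∀ N, ∀ w : List (Fin n), w.length = N → f w = g w from funext fun w => this _ w rfl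
  intro N
  induction N using Nat.strong_induction_on with
  | _ N ih =>
  intro w hw
  cases N with
  | zero => rw [List.length_eq_zero_iff.mp hw, hf, hg]
  | succ N =>
    -- in the coefficient of `w` in `f * f`, all terms but `f w + f w` involve shorter words
    have hfg := congrFun h w
    have inner : ∀ k ∈ range N, f (w.take (k + 1)) * f (w.drop (k + 1))
        = g (w.take (k + 1)) * g (w.drop (k + 1)) := by
      intro k hk
      have hk := mem_range.mp hk
      rw [ih _ (by simp [hw]; omega) _ rfl, ih _ (by simp [hw]) _ rfl]
    rw [NC.mul_apply, NC.mul_apply, hw, sum_range_succ', sum_range_succ, sum_range_succ',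
      sum_range_succ, sum_congr rfl inner, ← hw] at hfg
    simp only [List.take_zero, List.drop_zero, List.take_length, List.drop_length, hf, hg] at hfg
    linarith

theorem pow_apply_eq_zero {u : NC n} (hu : u [] = 0) {k : ℕ} {w : List (Fin n)}
    (h : w.length < k) : pow u k w = 0 := by
  induction k generalizing w with
  | zero => omega
  | succ k ih =>
    change mul u (pow u k) w = 0
    refine sum_eq_zero fun j hj => ?_
    rcases j with _ | j
    · rw [List.take_zero, hu, zero_mul]
    · rw [ih (by simp at hj ⊢; omega), mul_zero]

/-- `p(u)`. Truncating the sum at the length of the word is harmless only when `u [] = 0`. -/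
noncomputable def eval (p : ℚ⟦X⟧) (u : NC n) : NC n :=
  fun w => ∑ k ∈ range (w.length + 1), coeff k p * pow u k w

theorem eval_apply {u : NC n} (hu : u [] = 0) (p : ℚ⟦X⟧) {N : ℕ} {w : List (Fin n)}
    (h : w.length < N) : eval p u w = ∑ k ∈ range N, coeff k p * pow u k w :=
  sum_subset (range_subset_range.mpr h) fun k _ hk => by
    rw [pow_apply_eq_zero hu (by simpa using hk), mul_zero]

theorem eval_mul {u : NC n} (hu : u [] = 0) (p q : ℚ⟦X⟧) :
    eval (p * q) u = mul (eval p u) (eval q u) := by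
  funext w
  set N := w.length + 1
  symm
  calc mul (eval p u) (eval q u) w
      = ∑ k ∈ range N, ∑ a ∈ range N, ∑ b ∈ range N,
          coeff a p * coeff b q * (pow u a (w.take k) * pow u b (w.drop k)) := by
        refine sum_congr rfl fun k hk => ?_
        have hk : k < N := mem_range.mp hk
        rw [eval_apply hu p (N := N) (by simp [hk]),
          eval_apply hu q (N := N) (by simp [N]), sum_mul_sum]
        exact sum_congr rfl fun a _ => sum_congr rfl fun b _ => by ring
    _ = ∑ a ∈ range N, ∑ b ∈ range N, coeff a p * coeff b q * pow u (a + b) w := by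
        rw [sum_comm]
        refine sum_congr rfl fun a _ => ?_
        rw [sum_comm]
        exact sum_congr rfl fun b _ => by rw [← mul_sum, NC.pow_add, NC.mul_apply]
    _ = ∑ a ∈ range N, ∑ b ∈ range (N - a), coeff a p * coeff b q * pow u (a + b) w := by
        refine sum_congr rfl fun a _ => (sum_subset ?_ fun b _ hb => ?_).symm
        · exact range_subset_range.mpr (Nat.sub_le N a)
        · rw [pow_apply_eq_zero hu (by simp at hb; omega), mul_zero]
    _ = eval (p * q) u w := by
        rw [← sum_range_diag_flip, eval]
        refine sum_congr rfl fun m _ => ?_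
        rw [coeff_mul, Nat.sum_antidiagonal_eq_sum_range_succ_mk, sum_mul]
        refine sum_congr rfl fun a ha => ?_
        rw [Nat.add_sub_cancel' (Nat.lt_succ_iff.mp (mem_range.mp ha))]

theorem eval_one (u : NC n) : eval 1 u = one := by
  funext w
  simp [eval, coeff_one, pow]

theorem eval_add (p q : ℚ⟦X⟧) (u : NC n) : eval (p + q) u = add (eval p u) (eval q u) := by
  funext w
  simp [eval, add, add_mul, sum_add_distrib]

theorem eval_X {u : NC n} (hu : u [] = 0) : eval PowerSeries.X u = u := by
  funext w
  rw [eval_apply hu _ (N := w.length + 2) (by omega), sum_eq_single 1]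
  · rw [coeff_one_X, one_mul, pow, pow, NC.mul_one]
  · intro k _ hk
    rw [coeff_X, if_neg hk, zero_mul]
  · simp

theorem eval_pow {u : NC n} (hu : u [] = 0) (p : ℚ⟦X⟧) (m : ℕ) :
    eval (p ^ m) u = pow (eval p u) m := by
  induction m with
  | zero => rw [_root_.pow_zero, eval_one, pow]
  | succ m ih => rw [_root_.pow_succ', eval_mul hu, ih, pow]

theorem eval_subst {u : NC n} (hu : u [] = 0) {q : ℚ⟦X⟧} (hq : constantCoeff q = 0)
    (p : ℚ⟦X⟧) : eval (p.subst q) u = eval p (eval q u) := by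
  funext w
  set N := w.length + 1
  symm
  calc eval p (eval q u) w
      = ∑ m ∈ range N, ∑ k ∈ range N, coeff m p * coeff k (q ^ m) * pow u k w := by
        refine sum_congr rfl fun m _ => ?_
        rw [← eval_pow hu, eval, mul_sum]
        exact sum_congr rfl fun k _ => by ring
    _ = eval (p.subst q) u w := by
        rw [sum_comm, eval]
        refine sum_congr rfl fun k hk => ?_
        rw [coeff_subst_eq_sum hq p (mem_range.mp hk), sum_mul]

theorem pow_smul (q : ℚ) (u : NC n) (k : ℕ) : pow (smul q u) k = smul (q ^ k) (pow u k) := by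
  induction k with
  | zero => funext w; simp [pow, smul]
  | succ k ih =>
    funext w
    change mul (smul q u) (pow (smul q u) k) w = smul (q ^ (k + 1)) (mul u (pow u k)) w
    rw [ih, NC.mul_apply, smul, NC.mul_apply, mul_sum]
    exact sum_congr rfl fun j _ => by simp only [smul]; ring

theorem eval_rescale (q : ℚ) (p : ℚ⟦X⟧) (u : NC n) :
    eval (rescale q p) u = eval p (smul q u) := by
  funext w
  refine sum_congr rfl fun k _ => ?_
  rw [coeff_rescale, pow_smul, smul]
  ring

theorem exp_eq_eval (u : NC n) : exp u = eval (PowerSeries.exp ℚ) u := by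
  funext w
  simp [exp, eval, coeff_exp]

theorem log_eq_eval (g : NC n) : log g = eval (PowerSeries.log ℚ) (sub g one) := by
  funext w
  refine sum_congr rfl fun k _ => ?_
  rcases k with _ | k <;> simp [div_eq_mul_inv]

theorem exp_apply_nil (u : NC n) : exp u [] = 1 := by
  simp [exp, pow, one]

theorem log_apply_nil (g : NC n) : log g [] = 0 := by
  simp [log]

theorem exp_log {g : NC n} (hg : g [] = 1) : exp (log g) = g := by
  have hu : sub g one [] = 0 := by simp [sub, one, hg]
  rw [log_eq_eval, exp_eq_eval, ← eval_subst hu constantCoeff_log, exp_subst_log, eval_add,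
    eval_one, eval_X hu]
  funext w
  simp [add, sub]

theorem exp_bch (f g : NC n) : exp (bch f g) = mul (exp f) (exp g) :=
  exp_log (by rw [mul_apply_nil, exp_apply_nil, exp_apply_nil, mul_one])

theorem exp_smul_mul_exp_smul {u : NC n} (hu : u [] = 0) (q r : ℚ) :
    mul (exp (smul q u)) (exp (smul r u)) = exp (smul (q + r) u) := by
  simp only [exp_eq_eval, ← eval_rescale, ← eval_mul hu, exp_mul_exp_eq_exp_add]

theorem exp_smul_zero (u : NC n) : exp (smul 0 u) = one := by
  rw [exp_eq_eval, ← eval_rescale, rescale_zero_apply, constantCoeff_exp, map_one, eval_one]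

theorem smul_one (u : NC n) : smul 1 u = u := by
  funext w
  simp [smul]

theorem neg_eq_smul (u : NC n) : neg u = smul (-1) u := by
  funext w
  simp [neg, smul]

theorem exp_mul_exp_neg {u : NC n} (hu : u [] = 0) : mul (exp u) (exp (neg u)) = one := by
  simpa [smul_one, neg_eq_smul, exp_smul_zero] using exp_smul_mul_exp_smul hu 1 (-1)

theorem exp_neg_mul_exp {u : NC n} (hu : u [] = 0) : mul (exp (neg u)) (exp u) = one := by
  simpa [smul_one, neg_eq_smul, exp_smul_zero] using exp_smul_mul_exp_smul hu (-1) 1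

theorem exp_half_mul_exp_half {u : NC n} (hu : u [] = 0) :
    mul (exp (smul (1 / 2) u)) (exp (smul (1 / 2) u)) = exp u := by
  rw [exp_smul_mul_exp_smul hu, add_halves, smul_one]

theorem mu2_comm {f g : NC n} (hf : f [] = 0) (hg : g [] = 0) : mu2 f g = mu2 g f := by
  let _ : Monoid (NC n) := mulMonoid
  let expUnit (u : NC n) (hu : u [] = 0) : (NC n)ˣ :=
    ⟨exp u, exp (neg u), exp_mul_exp_neg hu, exp_neg_mul_exp hu⟩
  have hhalf (u : NC n) (hu : u [] = 0) : smul (1 / 2) u [] = 0 := by simp [smul, hu]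
  let a := expUnit f hf
  let b := expUnit g hg
  let s := expUnit (smul (1 / 2) (bch (neg f) g)) (hhalf _ (log_apply_nil _))
  let t := expUnit (smul (1 / 2) (bch (neg g) f)) (hhalf _ (log_apply_nil _))
  have hs : s * s = a⁻¹ * b :=
    Units.ext ((exp_half_mul_exp_half (log_apply_nil _)).trans (exp_bch (neg f) g))
  have ht : t * t = b⁻¹ * a :=
    Units.ext ((exp_half_mul_exp_half (log_apply_nil _)).trans (exp_bch (neg g) f))
  have hroot : s⁻¹ = t := by
    have hsq : s⁻¹ * s⁻¹ = t * t := by rw [← mul_inv_rev, hs, mul_inv_rev, inv_inv, ht]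
    exact Units.ext <|
      eq_of_mul_self_eq (exp_apply_nil _) (exp_apply_nil _) (congrArg Units.val hsq)
  have hmid : a * s = b * t := by
    rw [← hroot, _root_.eq_mul_inv_iff_mul_eq, mul_assoc, hs, mul_inv_cancel_left]
  exact congrArg (fun v => log v.val) hmid

end NC

/-- `μ₂(x,y) = BCH(x, ½BCH(-x,y))` is symmetric: `μ₂(x,y) = μ₂(y,x)`. -/
theorem mu2_symm :
    NC.mu2 (NC.X (0 : Fin 2)) (NC.X 1) = NC.mu2 (NC.X 1) (NC.X 0) :=
  NC.mu2_comm rfl rfl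
end

section
/- Let g be a Lie algebra with a g-action on a set X, meaning bijections u_e : X → X for each e ∈ g satisfying u_f ∘ u_e = u_{BCH(e,f)}, u_0 = id, and (u_e(a) = a ⟹ u_{e/2}(a) = a). If u_x(a) = b and u_y(a) = b, then u_{μ₂(x,y)}(a) = b, where μ₂(x,y) = BCH(x, (1/2)BCH(-x,y)). -/
/-- Let `g` be a Lie algebra over `ℚ` with a BCH operation `B`
(so that `B x (-x) = 0`), and a `g`-action on a set `X`: bijections `u e`
with `u f ∘ u e = u (B e f)`, `u 0 = id`, and `u e a = a → u (e/2) a = a`.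
If `u x a = b` and `u y a = b` then `u (μ₂ x y) a = b`, where
`μ₂ x y = B x (½ • B (-x) y)`. -/
theorem mu2_action {g X : Type*} [LieRing g] [LieAlgebra ℚ g]
    (B : g → g → g) (u : g → X → X)
    (hbij : ∀ e : g, Function.Bijective (u e))
    (hcomp : ∀ (e f : g) (a : X), u f (u e a) = u (B e f) a)
    (hzero : ∀ a : X, u 0 a = a)
    (hhalf : ∀ (e : g) (a : X), u e a = a → u ((1/2 : ℚ) • e) a = a)
    (hBinv : ∀ x : g, B x (-x) = 0)
    (x y : g) (a b : X) (hx : u x a = b) (hy : u y a = b) :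
    u (B x ((1/2 : ℚ) • B (-x) y)) a = b := by
  have h1 : u (-x) b = a := by rw [← hx, hcomp, hBinv, hzero]
  have h2 : u (B (-x) y) b = b := by rw [← hcomp, h1, hy]
  have h3 := hhalf _ _ h2
  rw [← hcomp, hx, h3]
end

section
/- In the free Lie algebra on x₁,...,xₙ over ℚ, the Sₙ-invariant subspace of the component spanned by Lie monomials with exactly two brackets is one-dimensional, spanned by Σ_{i≠j} [x_i,[x_i,x_j]]. -/
/-!
Averaging over `Sₙ` is a projection of `V^[2]` onto its invariants, so it suffices to average
each spanning monomial `⁅x_i, ⁅x_j, x_k⁆⁆`. The average vanishes when `j = k`, and also when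
`i, j, k` are distinct, since precomposing with the transposition `(j k)` negates each term.
When `i = j` (or, after antisymmetry, `i = k`), every ordered pair `(a, b)` with `a ≠ b` is
hit by the same number of permutations, so the average is a multiple of
`s = Σ_{a ≠ b} ⁅x_a, ⁅x_a, x_b⁆⁆`. Finally `s ≠ 0`, because `x_a ↦ e`, `x_b ↦ f`, all other
generators `↦ 0`, sends it to `⁅e, ⁅e, f⁆⁆ + ⁅f, ⁅f, e⁆⁆ = -2(e + f)` in `𝔤𝔩₂`.
-/

open Finset Equiv

theorem Equiv.Perm.exists_apply_eq_and_apply_eq {α : Type*} [DecidableEq α] {a b c d : α}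
    (hab : a ≠ b) (hcd : c ≠ d) : ∃ τ : Perm α, τ a = c ∧ τ b = d := by
  have hb : swap a c b ≠ c := by simpa using (swap a c).injective.ne hab.symm
  refine ⟨swap (swap a c b) d * swap a c, ?_, by simp⟩
  simp [swap_apply_of_ne_of_ne hb.symm hcd]

theorem Equiv.Perm.card_filter_apply_pair_eq {α : Type*} [Fintype α] [DecidableEq α] {i k : α}
    (hik : i ≠ k) {a b : α} (hab : a ≠ b) :
    #{σ : Perm α | (σ i, σ k) = (a, b)} = #{σ : Perm α | (σ i, σ k) = (i, k)} := by
  obtain ⟨τ, hτi, hτk⟩ := exists_apply_eq_and_apply_eq hik hab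
  refine card_nbij' (τ⁻¹ * ·) (τ * ·) ?_ ?_ (fun σ _ => by simp) (fun σ _ => by simp)
  · intro σ hσ
    simp only [coe_filter, mem_univ, true_and, Set.mem_ofPred_eq, Prod.mk.injEq] at hσ ⊢
    simp [symm_apply_eq, hσ.1, hσ.2, hτi, hτk]
  · intro σ hσ
    simp only [coe_filter, mem_univ, true_and, Set.mem_ofPred_eq, Prod.mk.injEq] at hσ ⊢
    simp [hσ.1, hσ.2, hτi, hτk]

theorem Equiv.Perm.sum_apply_pair_eq_card_smul_sum {α M : Type*} [Fintype α] [DecidableEq α]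
    [AddCommMonoid M] (F : α × α → M) (hF : ∀ a, F (a, a) = 0) {i k : α} (hik : i ≠ k) :
    ∑ σ : Perm α, F (σ i, σ k) = #{σ : Perm α | (σ i, σ k) = (i, k)} • ∑ p, F p := by
  calc ∑ σ : Perm α, F (σ i, σ k)
      = ∑ p, ∑ σ : Perm α with (σ i, σ k) = p, F (σ i, σ k) := by rw [sum_fiberwise]
    _ = ∑ p, #{σ : Perm α | (σ i, σ k) = p} • F p :=
        sum_congr rfl fun p _ => by
          rw [sum_congr rfl fun σ hσ => by rw [(mem_filter.1 hσ).2], sum_const]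
    _ = ∑ p, #{σ : Perm α | (σ i, σ k) = (i, k)} • F p := by
        refine sum_congr rfl fun ⟨a, b⟩ _ => ?_
        rcases eq_or_ne a b with rfl | hab
        · simp [hF]
        · rw [card_filter_apply_pair_eq hik hab]
    _ = _ := (smul_sum ..).symm

theorem Submodule.mem_of_forall_apply_eq_of_sum_mem {K M ι : Type*} [DivisionRing K]
    [CharZero K] [AddCommGroup M] [Module K M] [Fintype ι] [Nonempty ι] (f : ι → M →ₗ[K] M)
    {T : Set M} {W : Submodule K M} (hT : ∀ t ∈ T, ∑ i, f i t ∈ W) {v : M}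
    (hv : v ∈ span K T) (hfix : ∀ i, f i v = v) : v ∈ W := by
  have hsum : (∑ i, f i) v ∈ W :=
    (span_le (p := W.comap (∑ i, f i))).2 (fun t ht => by simpa using hT t ht) hv
  rw [LinearMap.sum_apply, sum_congr rfl fun i _ => hfix i, sum_const, card_univ,
    ← Nat.cast_smul_eq_nsmul K] at hsum
  exact (smul_mem_iff W (Nat.cast_ne_zero.2 Fintype.card_ne_zero)).1 hsum

attribute [local instance] LieRing.ofAssociativeRing in
theorem Matrix.lie_lie_add_lie_lie_ne_zero {K : Type*} [CommRing K] [NeZero (2 : K)] :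
    let e : Matrix (Fin 2) (Fin 2) K := !![0, 1; 0, 0]
    let f : Matrix (Fin 2) (Fin 2) K := !![0, 0; 1, 0]
    ⁅e, ⁅e, f⁆⁆ + ⁅f, ⁅f, e⁆⁆ ≠ 0 := by
  intro e f h
  have h01 := congr_fun (congr_fun h 0) 1
  simp [Ring.lie_def, e, f] at h01
  exact (two_ne_zero : (2 : K) ≠ 0) (by linear_combination -h01)

namespace FreeLieAlgebra

variable {K X : Type*} [CommRing K] [Fintype X] [DecidableEq X]

variable (K X) in
noncomputable def doubleBracketSum : FreeLieAlgebra K X :=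
  ∑ p ∈ univ.filter (fun p : X × X => p.1 ≠ p.2), ⁅of K p.1, ⁅of K p.1, of K p.2⁆⁆

theorem doubleBracketSum_eq_sum_univ :
    doubleBracketSum K X = ∑ p : X × X, ⁅of K p.1, ⁅of K p.1, of K p.2⁆⁆ :=
  sum_filter_of_ne fun p _ hp h => hp (by rw [h, lie_self, lie_zero])

theorem lift_doubleBracketSum {L : Type*} [LieRing L] [LieAlgebra K L] (g : X → L) :
    lift K g (doubleBracketSum K X) = ∑ a, ⁅g a, ⁅g a, ∑ b, g b⁆⁆ := by
  simp only [doubleBracketSum_eq_sum_univ, map_sum, LieHom.map_lie, lift_of_apply,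
    Fintype.sum_prod_type, lie_sum]

theorem lift_perm_doubleBracketSum (σ : Perm X) :
    lift K (fun t => of K (σ t)) (doubleBracketSum K X) = doubleBracketSum K X := by
  rw [doubleBracketSum_eq_sum_univ, map_sum]
  simp only [LieHom.map_lie, lift_of_apply]
  exact Fintype.sum_equiv (σ.prodCongr σ) _ _ fun _ => rfl

theorem lift_single_add_single_doubleBracketSum {L : Type*} [LieRing L] [LieAlgebra K L]
    {a b : X} (hab : a ≠ b) (e f : L) :
    lift K (Pi.single a e + Pi.single b f) (doubleBracketSum K X) =
      ⁅e, ⁅e, f⁆⁆ + ⁅f, ⁅f, e⁆⁆ := by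
  have hg : ∀ x, x ≠ a ∧ x ≠ b → (Pi.single a e + Pi.single b f : X → L) x = 0 :=
    fun x hx => by simp [hx.1, hx.2]
  rw [lift_doubleBracketSum, Fintype.sum_eq_add a b hab hg,
    Fintype.sum_eq_add a b hab fun x hx => by simp [hg x hx]]
  simp [hab, hab.symm]

attribute [local instance] LieRing.ofAssociativeRing in
theorem doubleBracketSum_ne_zero [Nontrivial X] [NeZero (2 : K)] : doubleBracketSum K X ≠ 0 := by
  obtain ⟨a, b, hab⟩ := exists_pair_ne X
  intro h
  apply Matrix.lie_lie_add_lie_lie_ne_zero (K := K)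
  rw [← lift_single_add_single_doubleBracketSum (K := K) hab, h, map_zero]

theorem sum_perm_lie_lie_self {i k : X} (hik : i ≠ k) :
    ∑ σ : Perm X, ⁅of K (σ i), ⁅of K (σ i), of K (σ k)⁆⁆ =
      #{σ : Perm X | (σ i, σ k) = (i, k)} • doubleBracketSum K X := by
  rw [doubleBracketSum_eq_sum_univ]
  exact Perm.sum_apply_pair_eq_card_smul_sum (fun p => ⁅of K p.1, ⁅of K p.1, of K p.2⁆⁆)
    (fun a => by simp) hik

theorem sum_perm_lie_lie_eq_zero {i j k : X} (hij : i ≠ j) (hik : i ≠ k) (hjk : j ≠ k) :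
    ∑ σ : Perm X, ⁅of K (σ i), ⁅of K (σ j), of K (σ k)⁆⁆ = 0 := by
  refine sum_ninvolution (· * swap j k) (fun σ => ?_) (fun σ _ => ?_) (fun _ => mem_univ _)
    (fun σ => by simp [mul_assoc])
  · rw [Perm.mul_apply, Perm.mul_apply, Perm.mul_apply, swap_apply_of_ne_of_ne hij hik,
      swap_apply_left, swap_apply_right, ← lie_skew (of K (σ j)), lie_neg, neg_add_cancel]
  · simpa using hjk

theorem sum_perm_lie_lie_mem_span (i j k : X) :
    ∑ σ : Perm X, ⁅of K (σ i), ⁅of K (σ j), of K (σ k)⁆⁆ ∈ K ∙ doubleBracketSum K X := by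
  rcases eq_or_ne j k with rfl | hjk
  · simp
  rcases eq_or_ne i j with rfl | hij
  · rw [sum_perm_lie_lie_self hjk]
    exact Submodule.smul_of_tower_mem _ _ (Submodule.mem_span_singleton_self _)
  rcases eq_or_ne i k with rfl | hik
  · rw [sum_congr rfl fun σ _ => by rw [← lie_skew (of K (σ j)), lie_neg], sum_neg_distrib,
      sum_perm_lie_lie_self hij]
    exact Submodule.neg_mem _
      (Submodule.smul_of_tower_mem _ _ (Submodule.mem_span_singleton_self _))
  · rw [sum_perm_lie_lie_eq_zero hij hik hjk]
    exact Submodule.zero_mem _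

end FreeLieAlgebra

open FreeLieAlgebra in
/-- in the free Lie algebra on `x₁,…,xₙ` over `ℚ` (`n ≥ 2`), the
`Sₙ`-invariant part of the component `V^[2]` spanned by Lie monomials with exactly
two brackets is one-dimensional, spanned by `s = Σ_{i≠j} [x_i,[x_i,x_j]]`:
`s` lies in `V^[2]`, is `Sₙ`-invariant, is nonzero, and every `Sₙ`-invariant
element of `V^[2]` is a scalar multiple of `s`. -/
theorem invariant_two_bracket_dim_one (n : ℕ) (hn : 2 ≤ n)
    (V2 : Submodule ℚ (FreeLieAlgebra ℚ (Fin n)))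
    (hV2 : V2 = Submodule.span ℚ
      {v | ∃ i j k : Fin n,
        v = ⁅FreeLieAlgebra.of ℚ i, ⁅FreeLieAlgebra.of ℚ j, FreeLieAlgebra.of ℚ k⁆⁆})
    (s : FreeLieAlgebra ℚ (Fin n))
    (hs : s = ∑ p ∈ Finset.univ.filter (fun p : Fin n × Fin n => p.1 ≠ p.2),
      ⁅FreeLieAlgebra.of ℚ p.1, ⁅FreeLieAlgebra.of ℚ p.1, FreeLieAlgebra.of ℚ p.2⁆⁆) :
    s ∈ V2 ∧
    (∀ σ : Equiv.Perm (Fin n),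
      (FreeLieAlgebra.lift ℚ (fun t => FreeLieAlgebra.of ℚ (σ t))) s = s) ∧
    s ≠ 0 ∧
    (∀ v ∈ V2,
      (∀ σ : Equiv.Perm (Fin n),
        (FreeLieAlgebra.lift ℚ (fun t => FreeLieAlgebra.of ℚ (σ t))) v = v) →
      ∃ q : ℚ, v = q • s) := by
  have : Nontrivial (Fin n) := Fin.nontrivial_iff_two_le.2 hn
  change s = doubleBracketSum ℚ (Fin n) at hs
  subst hV2 hs
  refine ⟨Submodule.sum_mem _ fun p _ => Submodule.subset_span ⟨p.1, p.1, p.2, rfl⟩,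
    lift_perm_doubleBracketSum, doubleBracketSum_ne_zero, fun v hv hfix => ?_⟩
  have hT : ∀ t ∈ {v | ∃ i j k : Fin n, v = ⁅of ℚ i, ⁅of ℚ j, of ℚ k⁆⁆},
      ∑ σ : Perm (Fin n), (lift ℚ fun t => of ℚ (σ t)).toLinearMap t ∈
        ℚ ∙ doubleBracketSum ℚ (Fin n) := by
    rintro _ ⟨i, j, k, rfl⟩
    simpa using sum_perm_lie_lie_mem_span i j k
  obtain ⟨q, hq⟩ := Submodule.mem_span_singleton.1 <|
    Submodule.mem_of_forall_apply_eq_of_sum_mem _ hT hv hfix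
  exact ⟨q, hq.symm⟩
end

section
/- For indices over {1,...,n}, Σ_{k,l,m} N(k,l,m)·[x_k,[x_l,x_m]] = (n-1)·Σ_{k≠m} [x_k,[x_k,x_m]], where N(k,l,m) = #{(i,j) : i ≠ j, i ≠ k, i ≠ l, j ≠ m} counts pairs of distinct indices i,j in {1,...,n} with i ∉ {k,l} and j ≠ m. -/
section Aux

variable {L : Type*} [LieRing L] {ι : Type*}

lemma my_lie_sum (x : L) (s : Finset ι) (f : ι → L) :
    ⁅x, ∑ i ∈ s, f i⁆ = ∑ i ∈ s, ⁅x, f i⁆ := by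
  induction s using Finset.cons_induction with
  | empty => simp
  | cons a s h ih => simp [Finset.sum_cons, lie_add, ih]

lemma my_sum_lie (x : L) (s : Finset ι) (f : ι → L) :
    ⁅∑ i ∈ s, f i, x⁆ = ∑ i ∈ s, ⁅f i, x⁆ := by
  induction s using Finset.cons_induction with
  | empty => simp
  | cons a s h ih => simp [Finset.sum_cons, add_lie, ih]

lemma sum_offdiag {M : Type*} [AddCommGroup M] {n : ℕ} (g : Fin n → Fin n → M) :
    ∑ p ∈ Finset.univ.filter (fun p : Fin n × Fin n => p.1 ≠ p.2), g p.1 p.2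
      = (∑ i : Fin n, ∑ j : Fin n, g i j) - ∑ i : Fin n, g i i := by
  have h0 : ∑ p : Fin n × Fin n, g p.1 p.2 = ∑ i : Fin n, ∑ j : Fin n, g i j := by
    rw [← Finset.sum_product']; rfl
  have h1 : ∑ p ∈ Finset.univ.filter (fun p : Fin n × Fin n => p.1 ≠ p.2), g p.1 p.2
      + ∑ p ∈ Finset.univ.filter (fun p : Fin n × Fin n => ¬ p.1 ≠ p.2), g p.1 p.2
      = ∑ p : Fin n × Fin n, g p.1 p.2 := Finset.sum_filter_add_sum_filter_not _ _ _
  have h2 : ∑ p ∈ Finset.univ.filter (fun p : Fin n × Fin n => ¬ p.1 ≠ p.2), g p.1 p.2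
      = ∑ i : Fin n, g i i := by
    refine Finset.sum_nbij' (fun p => p.1) (fun i => (i, i)) ?_ ?_ ?_ ?_ ?_
    · intro p hp; simp
    · intro i hi; simp
    · intro p hp
      simp only [Finset.mem_filter, not_not] at hp
      simp [Prod.ext_iff, hp.2]
    · intro i hi; rfl
    · intro p hp
      simp only [Finset.mem_filter, not_not] at hp
      simp [hp.2]
  rw [h2, h0] at h1
  exact eq_sub_of_add_eq h1

end Aux

/-- in the free Lie algebra on `x₁,…,xₙ` over `ℚ`, with
`N(k,l,m) = #{(i,j) : i ≠ j, i ∉ {k,l}, j ≠ m}`, one has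
`Σ_{k,l,m} N(k,l,m)·[x_k,[x_l,x_m]] = (n-1)·Σ_{k≠m} [x_k,[x_k,x_m]]`. -/
theorem counted_bracket_sum (n : ℕ) (hn : 2 ≤ n)
    (N : Fin n → Fin n → Fin n → ℕ)
    (hN : ∀ k l m, N k l m =
      (Finset.univ.filter (fun p : Fin n × Fin n =>
        p.1 ≠ p.2 ∧ p.1 ≠ k ∧ p.1 ≠ l ∧ p.2 ≠ m)).card) :
    ∑ k : Fin n, ∑ l : Fin n, ∑ m : Fin n,
        (N k l m : ℚ) •
          ⁅FreeLieAlgebra.of ℚ k, ⁅FreeLieAlgebra.of ℚ l, FreeLieAlgebra.of ℚ m⁆⁆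
      = ((n : ℚ) - 1) •
          ∑ p ∈ Finset.univ.filter (fun p : Fin n × Fin n => p.1 ≠ p.2),
            ⁅FreeLieAlgebra.of ℚ p.1,
              ⁅FreeLieAlgebra.of ℚ p.1, FreeLieAlgebra.of ℚ p.2⁆⁆ := by
  classical
  set x : Fin n → FreeLieAlgebra ℚ (Fin n) := FreeLieAlgebra.of ℚ with hx
  set S : FreeLieAlgebra ℚ (Fin n) := ∑ i : Fin n, x i with hSdef
  set P : Finset (Fin n × Fin n) :=
    Finset.univ.filter (fun p : Fin n × Fin n => p.1 ≠ p.2) with hP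
  have hA : ∀ i : Fin n, ∑ k ∈ Finset.univ.filter (fun k => i ≠ k), x k = S - x i := by
    intro i
    rw [Finset.filter_ne, Finset.sum_erase_eq_sub (Finset.mem_univ i)]
  -- Step 1
  have e1 : ∀ k l m : Fin n, (N k l m : ℚ) • ⁅x k, ⁅x l, x m⁆⁆
      = ∑ p ∈ P, if p.1 ≠ k ∧ p.1 ≠ l ∧ p.2 ≠ m then ⁅x k, ⁅x l, x m⁆⁆ else 0 := by
    intro k l m
    rw [← Finset.sum_filter, Finset.sum_const, hP, Finset.filter_filter]
    rw [hN k l m, Nat.cast_smul_eq_nsmul]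
  have step1 : ∑ k : Fin n, ∑ l : Fin n, ∑ m : Fin n, (N k l m : ℚ) • ⁅x k, ⁅x l, x m⁆⁆
      = ∑ p ∈ P, ⁅S - x p.1, ⁅S - x p.1, S - x p.2⁆⁆ := by
    calc ∑ k : Fin n, ∑ l : Fin n, ∑ m : Fin n, (N k l m : ℚ) • ⁅x k, ⁅x l, x m⁆⁆
        = ∑ k : Fin n, ∑ l : Fin n, ∑ m : Fin n, ∑ p ∈ P,
            (if p.1 ≠ k ∧ p.1 ≠ l ∧ p.2 ≠ m then ⁅x k, ⁅x l, x m⁆⁆ else 0) := by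
          exact Finset.sum_congr rfl fun k _ => Finset.sum_congr rfl fun l _ =>
            Finset.sum_congr rfl fun m _ => e1 k l m
      _ = ∑ k : Fin n, ∑ l : Fin n, ∑ p ∈ P, ∑ m : Fin n,
            (if p.1 ≠ k ∧ p.1 ≠ l ∧ p.2 ≠ m then ⁅x k, ⁅x l, x m⁆⁆ else 0) :=
          Finset.sum_congr rfl fun k _ => Finset.sum_congr rfl fun l _ => Finset.sum_comm
      _ = ∑ k : Fin n, ∑ p ∈ P, ∑ l : Fin n, ∑ m : Fin n,
            (if p.1 ≠ k ∧ p.1 ≠ l ∧ p.2 ≠ m then ⁅x k, ⁅x l, x m⁆⁆ else 0) :=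
          Finset.sum_congr rfl fun k _ => Finset.sum_comm
      _ = ∑ p ∈ P, ∑ k : Fin n, ∑ l : Fin n, ∑ m : Fin n,
            (if p.1 ≠ k ∧ p.1 ≠ l ∧ p.2 ≠ m then ⁅x k, ⁅x l, x m⁆⁆ else 0) :=
          Finset.sum_comm
      _ = ∑ p ∈ P, ⁅S - x p.1, ⁅S - x p.1, S - x p.2⁆⁆ := by
          refine Finset.sum_congr rfl fun p _ => ?_
          have inner3 : ∀ k l : Fin n,
              (∑ m : Fin n, if p.1 ≠ k ∧ p.1 ≠ l ∧ p.2 ≠ m then ⁅x k, ⁅x l, x m⁆⁆ else 0)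
              = if p.1 ≠ k ∧ p.1 ≠ l then ⁅x k, ⁅x l, S - x p.2⁆⁆ else 0 := by
            intro k l
            by_cases h : p.1 ≠ k ∧ p.1 ≠ l
            · rw [if_pos h]
              have : ∀ m : Fin n,
                  (if p.1 ≠ k ∧ p.1 ≠ l ∧ p.2 ≠ m then ⁅x k, ⁅x l, x m⁆⁆ else 0)
                  = if p.2 ≠ m then ⁅x k, ⁅x l, x m⁆⁆ else 0 := by
                intro m
                by_cases hm : p.2 ≠ m
                · rw [if_pos ⟨h.1, h.2, hm⟩, if_pos hm]
                · rw [if_neg (fun hc => hm hc.2.2), if_neg hm]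
              rw [Finset.sum_congr rfl fun m _ => this m, ← Finset.sum_filter,
                ← my_lie_sum, ← my_lie_sum, hA]
            · rw [if_neg h]
              refine Finset.sum_eq_zero fun m _ => ?_
              rw [if_neg (fun hc => h ⟨hc.1, hc.2.1⟩)]
          rw [Finset.sum_congr rfl fun k (_ : k ∈ Finset.univ) =>
            Finset.sum_congr rfl fun l (_ : l ∈ Finset.univ) => inner3 k l]
          have inner2 : ∀ k : Fin n,
              (∑ l : Fin n, if p.1 ≠ k ∧ p.1 ≠ l then ⁅x k, ⁅x l, S - x p.2⁆⁆ else 0)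
              = if p.1 ≠ k then ⁅x k, ⁅S - x p.1, S - x p.2⁆⁆ else 0 := by
            intro k
            by_cases h : p.1 ≠ k
            · rw [if_pos h]
              have : ∀ l : Fin n,
                  (if p.1 ≠ k ∧ p.1 ≠ l then ⁅x k, ⁅x l, S - x p.2⁆⁆ else 0)
                  = if p.1 ≠ l then ⁅x k, ⁅x l, S - x p.2⁆⁆ else 0 := by
                intro l
                by_cases hl : p.1 ≠ l
                · rw [if_pos ⟨h, hl⟩, if_pos hl]
                · rw [if_neg (fun hc => hl hc.2), if_neg hl]
              rw [Finset.sum_congr rfl fun l _ => this l, ← Finset.sum_filter,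
                ← my_lie_sum, ← my_sum_lie, hA]
            · rw [if_neg h]
              refine Finset.sum_eq_zero fun l _ => ?_
              rw [if_neg (fun hc => h hc.1)]
          rw [Finset.sum_congr rfl fun k (_ : k ∈ Finset.univ) => inner2 k,
            ← Finset.sum_filter, ← my_sum_lie, hA]
  rw [step1]
  -- Step 2: expand and evaluate
  have expand : ∀ a b : FreeLieAlgebra ℚ (Fin n),
      ⁅S - a, ⁅S - a, S - b⁆⁆
        = ⁅S, ⁅S, S⁆⁆ - ⁅S, ⁅S, b⁆⁆ - ⁅S, ⁅a, S⁆⁆ + ⁅S, ⁅a, b⁆⁆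
          - ⁅a, ⁅S, S⁆⁆ + ⁅a, ⁅S, b⁆⁆ + ⁅a, ⁅a, S⁆⁆ - ⁅a, ⁅a, b⁆⁆ := by
    intro a b
    simp only [lie_sub, sub_lie]
    abel
  rw [Finset.sum_congr rfl fun p (_ : p ∈ P) => expand (x p.1) (x p.2)]
  simp only [Finset.sum_add_distrib, Finset.sum_sub_distrib]
  -- basic vanishing facts
  have hSx : ∑ j : Fin n, ⁅S, x j⁆ = 0 := by
    rw [← my_lie_sum, ← hSdef, lie_self]
  have hxS : ∑ j : Fin n, ⁅x j, S⁆ = 0 := by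
    rw [← my_sum_lie, ← hSdef, lie_self]
  set E : FreeLieAlgebra ℚ (Fin n) := ∑ i : Fin n, ⁅x i, ⁅x i, S⁆⁆ with hE
  have hD : ∑ i : Fin n, ⁅x i, ⁅S, x i⁆⁆ = -E := by
    rw [hE, ← Finset.sum_neg_distrib]
    refine Finset.sum_congr rfl fun i _ => ?_
    rw [← lie_skew S (x i), lie_neg]
  have A1 : ∑ p ∈ P, ⁅S, ⁅S, S⁆⁆ = 0 := by simp [lie_self]
  have A2 : ∑ p ∈ P, ⁅S, ⁅S, x p.2⁆⁆ = 0 := by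
    rw [hP, sum_offdiag (fun i j => ⁅S, ⁅S, x j⁆⁆)]
    have c : ∑ j : Fin n, ⁅S, ⁅S, x j⁆⁆ = 0 := by
      rw [← my_lie_sum, hSx, lie_zero]
    simp [c]
  have A3 : ∑ p ∈ P, ⁅S, ⁅x p.1, S⁆⁆ = 0 := by
    rw [hP, sum_offdiag (fun i j => ⁅S, ⁅x i, S⁆⁆)]
    have c : ∑ i : Fin n, ⁅S, ⁅x i, S⁆⁆ = 0 := by
      rw [← my_lie_sum, hxS, lie_zero]
    rw [Finset.sum_comm]
    simp [c]
  have A4 : ∑ p ∈ P, ⁅S, ⁅x p.1, x p.2⁆⁆ = 0 := by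
    rw [hP, sum_offdiag (fun i j => ⁅S, ⁅x i, x j⁆⁆)]
    have c : ∀ i : Fin n, ∑ j : Fin n, ⁅S, ⁅x i, x j⁆⁆ = ⁅S, ⁅x i, S⁆⁆ := by
      intro i
      rw [← my_lie_sum, ← my_lie_sum, ← hSdef]
    have c2 : ∑ i : Fin n, ⁅S, ⁅x i, S⁆⁆ = 0 := by
      rw [← my_lie_sum, hxS, lie_zero]
    rw [Finset.sum_congr rfl fun i (_ : i ∈ Finset.univ) => c i, c2]
    simp [lie_self]
  have A5 : ∑ p ∈ P, ⁅x p.1, ⁅S, S⁆⁆ = 0 := by simp [lie_self]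
  have A6 : ∑ p ∈ P, ⁅x p.1, ⁅S, x p.2⁆⁆ = E := by
    rw [hP, sum_offdiag (fun i j => ⁅x i, ⁅S, x j⁆⁆)]
    have c : ∀ i : Fin n, ∑ j : Fin n, ⁅x i, ⁅S, x j⁆⁆ = 0 := by
      intro i
      rw [← my_lie_sum, hSx, lie_zero]
    rw [Finset.sum_congr rfl fun i (_ : i ∈ Finset.univ) => c i, hD]
    simp
  have A7 : ∑ p ∈ P, ⁅x p.1, ⁅x p.1, S⁆⁆ = n • E - E := by
    rw [hP, sum_offdiag (fun i j => ⁅x i, ⁅x i, S⁆⁆)]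
    have c : ∀ i : Fin n, ∑ _j : Fin n, ⁅x i, ⁅x i, S⁆⁆ = n • ⁅x i, ⁅x i, S⁆⁆ := by
      intro i
      rw [Finset.sum_const, Finset.card_univ, Fintype.card_fin]
    rw [Finset.sum_congr rfl fun i (_ : i ∈ Finset.univ) => c i, ← Finset.smul_sum, ← hE]
  have A8 : ∑ p ∈ P, ⁅x p.1, ⁅x p.1, x p.2⁆⁆ = E := by
    rw [hP, sum_offdiag (fun i j => ⁅x i, ⁅x i, x j⁆⁆)]
    have c : ∀ i : Fin n, ∑ j : Fin n, ⁅x i, ⁅x i, x j⁆⁆ = ⁅x i, ⁅x i, S⁆⁆ := by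
      intro i
      rw [← my_lie_sum, ← my_lie_sum, ← hSdef]
    rw [Finset.sum_congr rfl fun i (_ : i ∈ Finset.univ) => c i, ← hE]
    simp [lie_self]
  rw [A1, A2, A3, A4, A5, A6, A7, A8, sub_smul, one_smul, Nat.cast_smul_eq_nsmul]
  abel
end
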